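/- arXiv:2302.06518 — 11 statements merged into one kernel-verified Lean document; each statement's English description precedes it below -/
import Mathlib

section
/- Let r₁, r₂, r₃, r₄ > 1 be target values for the sensitivity parameters RR_{UY|T=1}, RR_{UY|T=0}, RR_{SU|T=1}, RR_{SU|T=0}, and let π ∈ (0,1), σ₀, σ₁ ∈ (0,1), p₀, p₁ ∈ (0,1) be target observed quantities. Then there exists a joint distribution of (Y, T, U, S) with Y, T, S valued in {0,1} and U valued in {0,1,2}, with all conditioning events below of positive probability, such that: (i) P(T=1) = π; (ii) P(S=1|T=t) = σ_t for t = 0,1; (iii) P(Y=1|T=t, S=1) = p_t for t = 0,1; (iv) Y is conditionally independent of S given (T,U); and (v) RR_{UY|T=1} = r₁, RR_{UY|T=0} = r₂, RR_{SU|T=1} = r₃, RR_{SU|T=0} = r₄. In particular, the four sensitivity parameters are variation independent: they are not restricted by each other or by the observed quantities. -/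
open Finset

namespace Stmt2

/- `P y t u s` is the joint pmf of `(Y, T, U, S)` with `Y, T, S` Boolean
(`true` encoding `1`) and `U` valued in `Fin 3`. -/
variable (P : Bool → Bool → Fin 3 → Bool → ℝ)

/-- `P(T = t)`. -/
noncomputable def mT (t : Bool) : ℝ := ∑ y : Bool, ∑ u : Fin 3, ∑ s : Bool, P y t u s

/-- `P(T = t, U = u)`. -/
noncomputable def mTU (t : Bool) (u : Fin 3) : ℝ := ∑ y : Bool, ∑ s : Bool, P y t u s

/-- `P(T = t, S = s)`. -/
noncomputable def mTS (t s : Bool) : ℝ := ∑ y : Bool, ∑ u : Fin 3, P y t u s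

/-- `P(Y = y, T = t, U = u)`. -/
noncomputable def mYTU (y t : Bool) (u : Fin 3) : ℝ := ∑ s : Bool, P y t u s

/-- `P(T = t, U = u, S = s)`. -/
noncomputable def mTUS (t : Bool) (u : Fin 3) (s : Bool) : ℝ := ∑ y : Bool, P y t u s

/-- `P(Y = y, T = t, S = s)`. -/
noncomputable def mYTS (y t s : Bool) : ℝ := ∑ u : Fin 3, P y t u s

/-- `P(Y = 1 | T = t, U = u)`. -/
noncomputable def pY1gTU (t : Bool) (u : Fin 3) : ℝ := mYTU P true t u / mTU P t u

/-- `P(U = u | T = t, S = s)`. -/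
noncomputable def pUgTS (t : Bool) (u : Fin 3) (s : Bool) : ℝ := mTUS P t u s / mTS P t s

end Stmt2

/-!
Build the law as `P(T) P(S | T) P(U | T, S) P(Y | T, U)`, so that `Y ⟂ S | (T, U)` holds by
construction. In arm `t` the outcome probabilities across `U = 0, 1, 2` are `m, R m, p` with
`m = p / (1 + (R - 1) p)`, hence `m < p < R m < 1` and the outcome risk ratio is `R`; the law of
`U` among the selected averages them to `p`, and can be chosen with `P(U = 0 | T, S = 1)` as
small as we like. The law of `U` among the unselected multiplies the mass at `U = 0` by `r` or
`1 / r` and rescales the other masses, so the selection ratio is `r` at `U = 0` and below `1`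
elsewhere; the smallness keeps `r₄ P(U = 0 | T = 0, S = 1)` below `1`.
-/

section ExtremeValues

variable {ι α : Type*} [Fintype ι] [Nonempty ι] [LinearOrder α]

lemma sup'_univ_eq_of_forall_le {f : ι → α} {i₀ : ι} (h : ∀ i, f i ≤ f i₀) :
    univ.sup' univ_nonempty f = f i₀ :=
  le_antisymm (sup'_le _ _ fun i _ => h i) (le_sup' f (mem_univ i₀))

lemma inf'_univ_eq_of_forall_ge {f : ι → α} {i₀ : ι} (h : ∀ i, f i₀ ≤ f i) :
    univ.inf' univ_nonempty f = f i₀ :=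
  le_antisymm (inf'_le f (mem_univ i₀)) (le_inf' _ _ fun i _ => h i)

end ExtremeValues

lemma exists_risk_ratio_bracket {p R : ℝ} (hp : p ∈ Set.Ioo 0 1) (hR : 1 < R) :
    ∃ m, 0 < m ∧ m < p ∧ p < R * m ∧ R * m < 1 := by
  obtain ⟨hp0, hp1⟩ := hp
  have hd : 0 < 1 + (R - 1) * p := by nlinarith
  refine ⟨p / (1 + (R - 1) * p), div_pos hp0 hd, ?_, ?_, ?_⟩
  · rw [div_lt_iff₀ hd]; nlinarith [mul_pos (mul_pos hp0 hp0) (sub_pos.2 hR)]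
  · rw [mul_div_assoc', lt_div_iff₀ hd]
    nlinarith [mul_pos (mul_pos hp0 (sub_pos.2 hp1)) (sub_pos.2 hR)]
  · rw [mul_div_assoc', div_lt_one hd]; linarith

lemma exists_weights_mean_eq {m M p ε : ℝ} (hmp : m < p) (hpM : p < M) (hε : ε ∈ Set.Ioo 0 1) :
    ∃ a : Fin 3 → ℝ, (∀ i, 0 < a i) ∧ ∑ i, a i = 1 ∧ ∑ i, a i * ![m, M, p] i = p ∧ a 0 < ε := by
  obtain ⟨hε0, hε1⟩ := hε
  have hMm : 0 < M - m := by linarith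
  refine ⟨![ε * (M - p) / (M - m), ε * (p - m) / (M - m), 1 - ε], ?_, ?_, ?_, ?_⟩
  · intro i
    fin_cases i <;> simp only [Fin.zero_eta, Fin.mk_one, Fin.reduceFinMk, Matrix.cons_val]
    · exact div_pos (mul_pos hε0 (by linarith)) hMm
    · exact div_pos (mul_pos hε0 (by linarith)) hMm
    · linarith
  · simp only [Fin.sum_univ_three, Matrix.cons_val]
    field_simp
    ring
  · simp only [Fin.sum_univ_three, Matrix.cons_val]
    field_simp
    ring
  · simp only [Matrix.cons_val]
    rw [div_lt_iff₀ hMm]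
    nlinarith

lemma exists_outcome_model {R p ε : ℝ} (hR : 1 < R) (hp : p ∈ Set.Ioo 0 1)
    (hε : ε ∈ Set.Ioo 0 1) :
    ∃ q a : Fin 3 → ℝ, (∀ u, q u ∈ Set.Ioo 0 1) ∧ (∀ u, 0 < a u) ∧ ∑ u, a u = 1 ∧
      ∑ u, a u * q u = p ∧
      univ.sup' univ_nonempty q / univ.inf' univ_nonempty q = R ∧ a 0 < ε := by
  obtain ⟨m, hm0, hmp, hpM, hM1⟩ := exists_risk_ratio_bracket hp hR
  obtain ⟨a, ha, hsum, hmean, hsmall⟩ := exists_weights_mean_eq hmp hpM hε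
  have hq : ∀ u, m ≤ ![m, R * m, p] u ∧ ![m, R * m, p] u ≤ R * m := by
    intro u
    fin_cases u <;> simp only [Fin.zero_eta, Fin.mk_one, Fin.reduceFinMk, Matrix.cons_val] <;>
      constructor <;> linarith
  refine ⟨![m, R * m, p], a, fun u => ⟨by linarith [(hq u).1], by linarith [(hq u).2]⟩, ha,
    hsum, hmean, ?_, hsmall⟩
  rw [sup'_univ_eq_of_forall_le (i₀ := 1) fun u => (hq u).2,
    inf'_univ_eq_of_forall_ge (i₀ := 0) fun u => (hq u).1]
  simp only [Matrix.cons_val]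
  field_simp

section Tilt

variable {ι : Type*} [DecidableEq ι]

noncomputable def tilt (x : ι → ℝ) (i₀ : ι) (k : ℝ) (i : ι) : ℝ :=
  if i = i₀ then k * x i₀ else (1 - k * x i₀) / (1 - x i₀) * x i

variable {x : ι → ℝ} {i₀ : ι} {k : ℝ}

lemma tilt_self : tilt x i₀ k i₀ = k * x i₀ := if_pos rfl

lemma tilt_of_ne {i : ι} (hi : i ≠ i₀) : tilt x i₀ k i = (1 - k * x i₀) / (1 - x i₀) * x i :=
  if_neg hi

lemma tilt_pos (hx : ∀ i, 0 < x i) (hx₀ : x i₀ < 1) (hk : 0 < k) (hkx : k * x i₀ < 1) (i : ι) :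
    0 < tilt x i₀ k i := by
  by_cases hi : i = i₀
  · subst hi; rw [tilt_self]; exact mul_pos hk (hx i)
  · rw [tilt_of_ne hi]
    exact mul_pos (div_pos (by linarith) (by linarith)) (hx i)

lemma sum_tilt [Fintype ι] (hsum : ∑ i, x i = 1) (hx₀ : x i₀ < 1) : ∑ i, tilt x i₀ k i = 1 := by
  have hrest : ∑ i ∈ univ.erase i₀, x i = 1 - x i₀ := by
    rw [← hsum, ← add_sum_erase _ _ (mem_univ i₀), add_sub_cancel_left]
  rw [← add_sum_erase _ _ (mem_univ i₀), tilt_self,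
    sum_congr rfl fun i hi => tilt_of_ne (ne_of_mem_erase hi), ← mul_sum, hrest,
    div_mul_cancel₀ _ (sub_ne_zero.2 hx₀.ne'), add_sub_cancel]

lemma tilt_div_self (hx : ∀ i, 0 < x i) : tilt x i₀ k i₀ / x i₀ = k := by
  rw [tilt_self, mul_div_cancel_right₀ _ (hx i₀).ne']

lemma tilt_div_self_of_ne (hx : ∀ i, 0 < x i) {i : ι} (hi : i ≠ i₀) :
    tilt x i₀ k i / x i = (1 - k * x i₀) / (1 - x i₀) := by
  rw [tilt_of_ne hi, mul_div_cancel_right₀ _ (hx i).ne']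

variable [Fintype ι] [Nonempty ι]

lemma exists_pmf_sup'_div_eq (hx : ∀ i, 0 < x i) (hsum : ∑ i, x i = 1) {r : ℝ} (hr : 1 < r)
    (hx₀ : x i₀ < r⁻¹) :
    ∃ y : ι → ℝ, (∀ i, 0 < y i) ∧ ∑ i, y i = 1 ∧
      univ.sup' univ_nonempty (fun i => y i / x i) = r := by
  have hr₀ : 0 < r := one_pos.trans hr
  have hrx : r * x i₀ < 1 := (lt_inv_mul_iff₀ hr₀).1 (by rwa [mul_one])
  have hx₁ : x i₀ < 1 := hx₀.trans (inv_lt_one_of_one_lt₀ hr)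
  refine ⟨tilt x i₀ r, tilt_pos hx hx₁ hr₀ hrx, sum_tilt hsum hx₁, ?_⟩
  rw [sup'_univ_eq_of_forall_le (i₀ := i₀), tilt_div_self hx]
  intro i
  rcases eq_or_ne i i₀ with rfl | hi
  · exact le_rfl
  rw [tilt_div_self_of_ne hx hi, tilt_div_self hx, div_le_iff₀ (by linarith)]
  nlinarith [hx i₀]

lemma exists_pmf_sup'_div_eq' (hx : ∀ i, 0 < x i) (hsum : ∑ i, x i = 1) {r : ℝ} (hr : 1 < r)
    (hx₀ : x i₀ < 1) :
    ∃ y : ι → ℝ, (∀ i, 0 < y i) ∧ ∑ i, y i = 1 ∧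
      univ.sup' univ_nonempty (fun i => x i / y i) = r := by
  have hr₀ : 0 < r := one_pos.trans hr
  have hrx : r⁻¹ * x i₀ < 1 := by
    rw [inv_mul_lt_iff₀ hr₀]; nlinarith
  refine ⟨tilt x i₀ r⁻¹, tilt_pos hx hx₀ (inv_pos.2 hr₀) hrx, sum_tilt hsum hx₀, ?_⟩
  have hinv : ∀ i, x i / tilt x i₀ r⁻¹ i = (tilt x i₀ r⁻¹ i / x i)⁻¹ := fun i => (inv_div _ _).symm
  simp only [hinv]
  rw [sup'_univ_eq_of_forall_le (i₀ := i₀), tilt_div_self hx, inv_inv]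
  intro i
  rcases eq_or_ne i i₀ with rfl | hi
  · exact le_rfl
  rw [tilt_div_self_of_ne hx hi, tilt_div_self hx, inv_inv, inv_div, div_le_iff₀ (by linarith)]
  rw [mul_sub, mul_one, mul_inv_cancel_left₀ hr₀.ne']
  linarith

end Tilt

def bernoulliMass (p : ℝ) (b : Bool) : ℝ := cond b p (1 - p)

@[simp] lemma bernoulliMass_true (p : ℝ) : bernoulliMass p true = p := rfl

@[simp] lemma sum_bernoulliMass (p : ℝ) : ∑ b, bernoulliMass p b = 1 := by
  simp [bernoulliMass]

lemma bernoulliMass_pos {p : ℝ} (hp : p ∈ Set.Ioo 0 1) (b : Bool) : 0 < bernoulliMass p b := by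
  cases b
  · exact sub_pos.2 hp.2
  · exact hp.1

namespace Stmt2

lemma mT_eq_sum_mTS (P : Bool → Bool → Fin 3 → Bool → ℝ) (t : Bool) :
    mT P t = ∑ s, mTS P t s := by
  simp only [mT, mTS, Fintype.sum_bool, Fin.sum_univ_three]
  ring

lemma sum_eq_sum_mT (P : Bool → Bool → Fin 3 → Bool → ℝ) :
    ∑ y, ∑ t, ∑ u, ∑ s, P y t u s = ∑ t, mT P t := by
  simp only [mT, Fintype.sum_bool]
  ring

/-- `π = P(T = 1)`, `σ t = P(S = 1 | T = t)`, `pU t s = P(U = · | T = t, S = s)` and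
`q t u = P(Y = 1 | T = t, U = u)`. -/
def jointPmf (π : ℝ) (σ : Bool → ℝ) (pU : Bool → Bool → Fin 3 → ℝ) (q : Bool → Fin 3 → ℝ)
    (y t : Bool) (u : Fin 3) (s : Bool) : ℝ :=
  bernoulliMass π t * bernoulliMass (σ t) s * pU t s u * bernoulliMass (q t u) y

variable {π : ℝ} {σ : Bool → ℝ} {pU : Bool → Bool → Fin 3 → ℝ} {q : Bool → Fin 3 → ℝ}

lemma mTUS_jointPmf (t : Bool) (u : Fin 3) (s : Bool) :
    mTUS (jointPmf π σ pU q) t u s = bernoulliMass π t * bernoulliMass (σ t) s * pU t s u := by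
  simp only [mTUS, jointPmf, ← mul_sum, sum_bernoulliMass, mul_one]

lemma mYTU_jointPmf (y t : Bool) (u : Fin 3) :
    mYTU (jointPmf π σ pU q) y t u =
      bernoulliMass π t * (∑ s, bernoulliMass (σ t) s * pU t s u) * bernoulliMass (q t u) y := by
  simp only [mYTU, jointPmf, mul_sum, sum_mul, mul_assoc]

lemma mTU_jointPmf (t : Bool) (u : Fin 3) :
    mTU (jointPmf π σ pU q) t u = bernoulliMass π t * ∑ s, bernoulliMass (σ t) s * pU t s u := by
  rw [mTU, sum_comm]
  simp only [jointPmf, ← mul_sum, sum_bernoulliMass, mul_one, mul_assoc]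

lemma jointPmf_mul_mTU (y t : Bool) (u : Fin 3) (s : Bool) :
    jointPmf π σ pU q y t u s * mTU (jointPmf π σ pU q) t u =
      mYTU (jointPmf π σ pU q) y t u * mTUS (jointPmf π σ pU q) t u s := by
  rw [mTU_jointPmf, mYTU_jointPmf, mTUS_jointPmf, jointPmf]
  ring

lemma mYTS_jointPmf (t s : Bool) :
    mYTS (jointPmf π σ pU q) true t s =
      bernoulliMass π t * bernoulliMass (σ t) s * ∑ u, pU t s u * q t u := by
  simp only [mYTS, jointPmf, bernoulliMass_true, mul_sum, mul_assoc]

lemma pY1gTU_jointPmf {t : Bool} {u : Fin 3} (h : mTU (jointPmf π σ pU q) t u ≠ 0) :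
    pY1gTU (jointPmf π σ pU q) t u = q t u := by
  rw [mTU_jointPmf] at h
  rw [pY1gTU, mYTU_jointPmf, mTU_jointPmf, bernoulliMass_true, mul_div_cancel_left₀ _ h]

lemma jointPmf_pos (hπ : π ∈ Set.Ioo 0 1) (hσ : ∀ t, σ t ∈ Set.Ioo 0 1)
    (hpU : ∀ t s u, 0 < pU t s u) (hq : ∀ t u, q t u ∈ Set.Ioo 0 1) (y t : Bool) (u : Fin 3)
    (s : Bool) : 0 < jointPmf π σ pU q y t u s :=
  mul_pos (mul_pos (mul_pos (bernoulliMass_pos hπ t) (bernoulliMass_pos (hσ t) s)) (hpU t s u))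
    (bernoulliMass_pos (hq t u) y)

lemma mTUS_jointPmf_pos (hπ : π ∈ Set.Ioo 0 1) (hσ : ∀ t, σ t ∈ Set.Ioo 0 1)
    (hpU : ∀ t s u, 0 < pU t s u) (t : Bool) (u : Fin 3) (s : Bool) :
    0 < mTUS (jointPmf π σ pU q) t u s := by
  rw [mTUS_jointPmf]
  exact mul_pos (mul_pos (bernoulliMass_pos hπ t) (bernoulliMass_pos (hσ t) s)) (hpU t s u)

lemma mTU_jointPmf_pos (hπ : π ∈ Set.Ioo 0 1) (hσ : ∀ t, σ t ∈ Set.Ioo 0 1)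
    (hpU : ∀ t s u, 0 < pU t s u) (t : Bool) (u : Fin 3) : 0 < mTU (jointPmf π σ pU q) t u := by
  rw [mTU_jointPmf]
  exact mul_pos (bernoulliMass_pos hπ t)
    (sum_pos (fun s _ => mul_pos (bernoulliMass_pos (hσ t) s) (hpU t s u)) univ_nonempty)

section Normalized

variable (hpU : ∀ t s, ∑ u, pU t s u = 1)
include hpU

lemma mTS_jointPmf (t s : Bool) :
    mTS (jointPmf π σ pU q) t s = bernoulliMass π t * bernoulliMass (σ t) s := by
  rw [mTS, sum_comm]
  simp only [jointPmf, ← mul_sum, sum_bernoulliMass, mul_one, hpU]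

lemma mTS_jointPmf_pos (hπ : π ∈ Set.Ioo 0 1) (hσ : ∀ t, σ t ∈ Set.Ioo 0 1) (t s : Bool) :
    0 < mTS (jointPmf π σ pU q) t s := by
  rw [mTS_jointPmf hpU]
  exact mul_pos (bernoulliMass_pos hπ t) (bernoulliMass_pos (hσ t) s)

lemma mT_jointPmf (t : Bool) : mT (jointPmf π σ pU q) t = bernoulliMass π t := by
  simp only [mT_eq_sum_mTS, mTS_jointPmf hpU, ← mul_sum, sum_bernoulliMass, mul_one]

lemma sum_jointPmf :
    ∑ y, ∑ t, ∑ u, ∑ s, jointPmf π σ pU q y t u s = 1 := by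
  simp only [sum_eq_sum_mT, mT_jointPmf hpU, sum_bernoulliMass]

lemma pUgTS_jointPmf {t s : Bool} (h : mTS (jointPmf π σ pU q) t s ≠ 0) (u : Fin 3) :
    pUgTS (jointPmf π σ pU q) t u s = pU t s u := by
  rw [mTS_jointPmf hpU] at h
  rw [pUgTS, mTUS_jointPmf, mTS_jointPmf hpU, mul_div_cancel_left₀ _ h]

end Normalized

end Stmt2

open Stmt2 in
/-- Variation independence of the sensitivity parameters for the total population:
for any targets `r₁, r₂, r₃, r₄ > 1` and observed quantities
`π, σ₀, σ₁, p₀, p₁ ∈ (0,1)` there is a joint distribution of `(Y, T, U, S)`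
with `U` valued in `{0, 1, 2}`, all conditioning events of positive probability,
matching the observed quantities, satisfying `Y ⟂ S | (T, U)`, and whose
sensitivity parameters `RR_{UY|T=1}`, `RR_{UY|T=0}`, `RR_{SU|T=1}`, `RR_{SU|T=0}`
equal `r₁`, `r₂`, `r₃`, `r₄` respectively. -/
theorem stmt2 (r₁ r₂ r₃ r₄ π σ₀ σ₁ p₀ p₁ : ℝ)
    (hr₁ : 1 < r₁) (hr₂ : 1 < r₂) (hr₃ : 1 < r₃) (hr₄ : 1 < r₄)
    (hπ : π ∈ Set.Ioo (0 : ℝ) 1) (hσ₀ : σ₀ ∈ Set.Ioo (0 : ℝ) 1)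
    (hσ₁ : σ₁ ∈ Set.Ioo (0 : ℝ) 1) (hp₀ : p₀ ∈ Set.Ioo (0 : ℝ) 1)
    (hp₁ : p₁ ∈ Set.Ioo (0 : ℝ) 1) :
    ∃ P : Bool → Bool → Fin 3 → Bool → ℝ,
      (∀ y t u s, 0 ≤ P y t u s) ∧
      (∑ y : Bool, ∑ t : Bool, ∑ u : Fin 3, ∑ s : Bool, P y t u s = 1) ∧
      (∀ t, 0 < mT P t) ∧ (∀ t u, 0 < mTU P t u) ∧
      (∀ t s, 0 < mTS P t s) ∧ (∀ t u s, 0 < mTUS P t u s) ∧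
      -- (i) P(T = 1) = π
      mT P true = π ∧
      -- (ii) P(S = 1 | T = t) = σ_t
      mTS P false true / mT P false = σ₀ ∧
      mTS P true true / mT P true = σ₁ ∧
      -- (iii) P(Y = 1 | T = t, S = 1) = p_t
      mYTS P true false true / mTS P false true = p₀ ∧
      mYTS P true true true / mTS P true true = p₁ ∧
      -- (iv) Y ⟂ S | (T, U)
      (∀ y t u s, P y t u s * mTU P t u = mYTU P y t u * mTUS P t u s) ∧
      -- (v) the four sensitivity parameters attain the targets
      (univ.sup' univ_nonempty (pY1gTU P true)) /
        (univ.inf' univ_nonempty (pY1gTU P true)) = r₁ ∧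
      (univ.sup' univ_nonempty (pY1gTU P false)) /
        (univ.inf' univ_nonempty (pY1gTU P false)) = r₂ ∧
      univ.sup' univ_nonempty
        (fun u : Fin 3 => pUgTS P true u true / pUgTS P true u false) = r₃ ∧
      univ.sup' univ_nonempty
        (fun u : Fin 3 => pUgTS P false u false / pUgTS P false u true) = r₄ := by
  have hε : r₄⁻¹ ∈ Set.Ioo (0 : ℝ) 1 :=
    ⟨inv_pos.2 (one_pos.trans hr₄), inv_lt_one_of_one_lt₀ hr₄⟩
  obtain ⟨q₁, a₁, hq₁, ha₁, ha₁sum, hmean₁, hR₁, ha₁small⟩ := exists_outcome_model hr₁ hp₁ hε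
  obtain ⟨q₀, a₀, hq₀, ha₀, ha₀sum, hmean₀, hR₀, ha₀small⟩ := exists_outcome_model hr₂ hp₀ hε
  obtain ⟨b₁, hb₁, hb₁sum, hSU₁⟩ := exists_pmf_sup'_div_eq' ha₁ ha₁sum hr₃ (ha₁small.trans hε.2)
  obtain ⟨b₀, hb₀, hb₀sum, hSU₀⟩ := exists_pmf_sup'_div_eq ha₀ ha₀sum hr₄ ha₀small
  set σ : Bool → ℝ := fun t => cond t σ₁ σ₀
  set pU : Bool → Bool → Fin 3 → ℝ := fun t s => cond t (cond s a₁ b₁) (cond s a₀ b₀)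
  set q : Bool → Fin 3 → ℝ := fun t => cond t q₁ q₀
  have hσ : ∀ t, σ t ∈ Set.Ioo 0 1 := by rintro (_ | _) <;> assumption
  have hpU : ∀ t s u, 0 < pU t s u := by rintro (_ | _) (_ | _) <;> assumption
  have hpUsum : ∀ t s, ∑ u, pU t s u = 1 := by rintro (_ | _) (_ | _) <;> assumption
  have hq : ∀ t u, q t u ∈ Set.Ioo 0 1 := by rintro (_ | _) <;> assumption
  have hY : ∀ t, pY1gTU (jointPmf π σ pU q) t = q t := fun t =>
    funext fun u => pY1gTU_jointPmf (mTU_jointPmf_pos hπ hσ hpU t u).ne'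
  have hU : ∀ t s u, pUgTS (jointPmf π σ pU q) t u s = pU t s u := fun t s =>
    pUgTS_jointPmf hpUsum (mTS_jointPmf_pos hpUsum hπ hσ t s).ne'
  have hT : ∀ t, bernoulliMass π t ≠ 0 := fun t => (bernoulliMass_pos hπ t).ne'
  have hTS : ∀ t, bernoulliMass π t * bernoulliMass (σ t) true ≠ 0 := fun t =>
    (mul_pos (bernoulliMass_pos hπ t) (bernoulliMass_pos (hσ t) true)).ne'
  refine ⟨jointPmf π σ pU q, fun y t u s => (jointPmf_pos hπ hσ hpU hq y t u s).le,
    sum_jointPmf hpUsum, fun t => ?_, mTU_jointPmf_pos hπ hσ hpU, mTS_jointPmf_pos hpUsum hπ hσ,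
    mTUS_jointPmf_pos hπ hσ hpU, mT_jointPmf hpUsum true, ?_, ?_, ?_, ?_, jointPmf_mul_mTU,
    by rw [hY]; exact hR₁, by rw [hY]; exact hR₀, by simp only [hU]; exact hSU₁,
    by simp only [hU]; exact hSU₀⟩
  · exact mT_jointPmf hpUsum t ▸ bernoulliMass_pos hπ t
  · rw [mTS_jointPmf hpUsum, mT_jointPmf hpUsum, mul_div_cancel_left₀ _ (hT false)]; rfl
  · rw [mTS_jointPmf hpUsum, mT_jointPmf hpUsum, mul_div_cancel_left₀ _ (hT true)]; rfl
  · rw [mYTS_jointPmf, mTS_jointPmf hpUsum, mul_div_cancel_left₀ _ (hTS false)]; exact hmean₀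
  · rw [mYTS_jointPmf, mTS_jointPmf hpUsum, mul_div_cancel_left₀ _ (hTS true)]; exact hmean₁
end

section
/- Let r_Y, r_T > 1 be target values for the sensitivity parameters RR_{UY|S=1} and RR_{TU|S=1}, and let π ∈ (0,1), p₀, p₁ ∈ (0,1) be target observed quantities. Then there exists a joint distribution of (Y, T, U) with Y, T valued in {0,1} and U valued in {0,1,2} (representing the subpopulation with I_S = 1), with all conditioning events of positive probability, such that: (i) P(T=1) = π; (ii) P(Y=1|T=t) = p_t for t = 0,1; and (iii) RR_{UY|S=1} = r_Y and RR_{TU|S=1} = r_T. In particular, the two sensitivity parameters are variation independent: they are not restricted by each other or by the observed distribution of (Y,T) in the subpopulation. -/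
open Finset

namespace Stmt4

/- `P y t u` is the joint pmf of `(Y, T, U)` within the selected
subpopulation (`I_S = 1`), with `Y, T` Boolean and `U` valued in `Fin 3`. -/
variable (P : Bool → Bool → Fin 3 → ℝ)

/-- `P(T = t | I_S = 1)`. -/
noncomputable def mT (t : Bool) : ℝ := ∑ y : Bool, ∑ u : Fin 3, P y t u

/-- `P(T = t, U = u | I_S = 1)`. -/
noncomputable def mTU (t : Bool) (u : Fin 3) : ℝ := ∑ y : Bool, P y t u

/-- `P(Y = 1 | T = t, I_S = 1)`. -/
noncomputable def pY1gT (t : Bool) : ℝ := (∑ u : Fin 3, P true t u) / mT P t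

/-- `P(Y = 1 | T = t, U = u, I_S = 1)`. -/
noncomputable def pY1gTU (t : Bool) (u : Fin 3) : ℝ := P true t u / mTU P t u

/-- `P(U = u | T = t, I_S = 1)`. -/
noncomputable def pUgT (t : Bool) (u : Fin 3) : ℝ := mTU P t u / mT P t

end Stmt4

/-!
Build the distribution from its conditionals `P(T)`, `P(U | T)` and `P(Y = 1 | T, U)`.
Given `T = 0`, `Y` is independent of `U`, which makes that arm's risk ratio `1`. Given
`T = 1`, `P(Y = 1 | U)` equals `l`, `r_Y l` and `p₁` at `U = 0, 1, 2`, where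
`l < p₁ < r_Y l < 1`, and `U = 0, 1` are weighted so that their mixture has mean `p₁`.
The probability of `U = 2` is `1/2` given `T = 1` and `1/(2 r_T)` given `T = 0`, with the
rest split in the same proportion between `U = 0` and `U = 1` in both arms; so
`P(U | T = 1) / P(U | T = 0)` is `r_T` at `U = 2` and below `1` elsewhere.
-/

namespace Finset

lemma sup'_univ_eq_of_forall_le {ι α : Type*} [Fintype ι] [Nonempty ι] [SemilatticeSup α]
    {f : ι → α} {a : α} (i : ι) (h : ∀ j, f j ≤ a) (hi : f i = a) :
    univ.sup' univ_nonempty f = a :=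
  le_antisymm (sup'_le _ _ fun j _ => h j) (hi ▸ le_sup' f (mem_univ i))

lemma inf'_univ_eq_of_forall_ge {ι α : Type*} [Fintype ι] [Nonempty ι] [SemilatticeInf α]
    {f : ι → α} {a : α} (i : ι) (h : ∀ j, a ≤ f j) (hi : f i = a) :
    univ.inf' univ_nonempty f = a :=
  le_antisymm (hi ▸ inf'_le f (mem_univ i)) (le_inf' _ _ fun j _ => h j)

end Finset

namespace Stmt4

lemma mT_eq_sum_mTU (P : Bool → Bool → Fin 3 → ℝ) (t : Bool) : mT P t = ∑ u, mTU P t u :=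
  sum_comm

def ofConditionals (m : Bool → ℝ) (g q : Bool → Fin 3 → ℝ) : Bool → Bool → Fin 3 → ℝ :=
  fun y t u => m t * g t u * (bif y then q t u else 1 - q t u)

section ofConditionals

variable {m : Bool → ℝ} {g q : Bool → Fin 3 → ℝ}

lemma ofConditionals_nonneg (hm : ∀ t, 0 ≤ m t) (hg : ∀ t u, 0 ≤ g t u)
    (hq : ∀ t u, q t u ∈ Set.Icc (0 : ℝ) 1) (y t u) : 0 ≤ ofConditionals m g q y t u := by
  obtain ⟨hq0, hq1⟩ := hq t u
  refine mul_nonneg (mul_nonneg (hm t) (hg t u)) ?_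
  cases y
  exacts [sub_nonneg.2 hq1, hq0]

lemma mTU_ofConditionals (t : Bool) (u : Fin 3) :
    mTU (ofConditionals m g q) t u = m t * g t u := by
  simp only [mTU, ofConditionals, Fintype.sum_bool, cond_true, cond_false]
  ring

lemma mT_ofConditionals (hg : ∀ t, ∑ u, g t u = 1) (t : Bool) :
    mT (ofConditionals m g q) t = m t := by
  simp only [mT_eq_sum_mTU, mTU_ofConditionals, ← mul_sum, hg, mul_one]

lemma sum_ofConditionals (hm : ∑ t, m t = 1) (hg : ∀ t, ∑ u, g t u = 1) :
    ∑ y, ∑ t, ∑ u, ofConditionals m g q y t u = 1 := by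
  calc _ = ∑ t, mT (ofConditionals m g q) t := sum_comm
    _ = 1 := by simpa only [mT_ofConditionals hg] using hm

lemma ofConditionals_isPMF_of_pos (hm : ∀ t, 0 < m t) (hmsum : ∑ t, m t = 1)
    (hg : ∀ t u, 0 < g t u) (hgsum : ∀ t, ∑ u, g t u = 1)
    (hq : ∀ t u, q t u ∈ Set.Icc (0 : ℝ) 1) :
    (∀ y t u, 0 ≤ ofConditionals m g q y t u) ∧
      ∑ y, ∑ t, ∑ u, ofConditionals m g q y t u = 1 ∧
      (∀ t, 0 < mT (ofConditionals m g q) t) ∧ ∀ t u, 0 < mTU (ofConditionals m g q) t u :=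
  ⟨ofConditionals_nonneg (fun t => (hm t).le) (fun t u => (hg t u).le) hq,
    sum_ofConditionals hmsum hgsum, fun t => (mT_ofConditionals hgsum t).symm ▸ hm t,
    fun t u => (mTU_ofConditionals t u).symm ▸ mul_pos (hm t) (hg t u)⟩

lemma pY1gTU_ofConditionals {t : Bool} {u : Fin 3} (h : m t * g t u ≠ 0) :
    pY1gTU (ofConditionals m g q) t u = q t u := by
  rw [pY1gTU, mTU_ofConditionals, ofConditionals, cond_true, mul_div_cancel_left₀ _ h]

lemma pUgT_ofConditionals (hg : ∀ t, ∑ u, g t u = 1) {t : Bool} (hm : m t ≠ 0) (u : Fin 3) :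
    pUgT (ofConditionals m g q) t u = g t u := by
  rw [pUgT, mTU_ofConditionals, mT_ofConditionals hg, mul_div_cancel_left₀ _ hm]

lemma pY1gT_ofConditionals (hg : ∀ t, ∑ u, g t u = 1) {t : Bool} (hm : m t ≠ 0) :
    pY1gT (ofConditionals m g q) t = ∑ u, g t u * q t u := by
  simp only [pY1gT, mT_ofConditionals hg, ofConditionals, cond_true, mul_assoc, ← mul_sum]
  exact mul_div_cancel_left₀ _ hm

end ofConditionals

def mix3 (a b s : ℝ) : Fin 3 → ℝ := ![a * (1 - s), b * (1 - s), s]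

section mix3

variable {a b s : ℝ}

lemma sum_mix3 (hab : a + b = 1) : ∑ u, mix3 a b s u = 1 := by
  simp only [mix3, Fin.sum_univ_three, Matrix.cons_val]
  linear_combination (1 - s) * hab

lemma mix3_pos (ha : 0 < a) (hb : 0 < b) (hs : s ∈ Set.Ioo (0 : ℝ) 1) (u : Fin 3) :
    0 < mix3 a b s u := by
  have : 0 < 1 - s := sub_pos.2 hs.2
  fin_cases u
  exacts [mul_pos ha this, mul_pos hb this, hs.1]

lemma sum_mix3_mul {l h p : ℝ} (hp : a * l + b * h = p) :
    ∑ u, mix3 a b s u * ![l, h, p] u = p := by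
  simp only [mix3, Fin.sum_univ_three, Matrix.cons_val]
  linear_combination (1 - s) * hp

lemma sup'_mix3_div_mix3 (ha : 0 < a) (hb : 0 < b) (hs : s ∈ Set.Ioo (0 : ℝ) 1) {r : ℝ}
    (hr : 1 < r) : univ.sup' univ_nonempty (fun u => mix3 a b s u / mix3 a b (s / r) u) = r := by
  have hsr : s / r < s := div_lt_self hs.1 hr
  have hlt : (1 - s) / (1 - s / r) < r :=
    ((div_lt_one (by linarith [hs.2])).2 (by linarith)).trans hr
  refine sup'_univ_eq_of_forall_le 2 (fun u => ?_) (by simp [mix3, hs.1.ne'])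
  fin_cases u <;> simp [mix3, mul_div_mul_left, ha.ne', hb.ne', hs.1.ne', hlt.le]

end mix3

lemma sup'_vecCons_div_inf'_vecCons {l p r : ℝ} (hl : 0 < l) (hlp : l ≤ p) (hpr : p ≤ r * l) :
    univ.sup' univ_nonempty ![l, r * l, p] / univ.inf' univ_nonempty ![l, r * l, p] = r := by
  rw [sup'_univ_eq_of_forall_le 1 (fun u => by fin_cases u <;> simp <;> linarith) rfl,
    inf'_univ_eq_of_forall_ge 0 (fun u => by fin_cases u <;> simp <;> linarith) rfl]
  simp [hl.ne']

lemma exists_pos_lt_lt_mul_lt_one {p r : ℝ} (hp : p ∈ Set.Ioo (0 : ℝ) 1) (hr : 1 < r) :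
    ∃ l, 0 < l ∧ l < p ∧ p < r * l ∧ r * l < 1 := by
  have hr0 : 0 < r := zero_lt_one.trans hr
  obtain ⟨l, hl, hlu⟩ :=
    exists_between (lt_min (div_lt_self hp.1 hr) (div_lt_div_of_pos_right hp.2 hr0))
  refine ⟨l, (div_pos hp.1 hr0).trans hl, hlu.trans_le (min_le_left _ _), ?_, ?_⟩
  · rwa [div_lt_iff₀' hr0] at hl
  · exact (lt_div_iff₀' hr0).1 (hlu.trans_le (min_le_right _ _))

end Stmt4

open Stmt4 in
/-- Variation independence of the sensitivity parameters for the subpopulation: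
for any targets `r_Y, r_T > 1` and observed quantities `π, p₀, p₁ ∈ (0,1)`, there
is a joint distribution of `(Y, T, U)` with `U` valued in `{0, 1, 2}`, all
conditioning events of positive probability, with `P(T=1) = π`,
`P(Y=1|T=t) = p_t`, `RR_{UY|S=1} = r_Y` and `RR_{TU|S=1} = r_T`. -/
theorem stmt4 (rY rT π p₀ p₁ : ℝ) (hrY : 1 < rY) (hrT : 1 < rT)
    (hπ : π ∈ Set.Ioo (0 : ℝ) 1) (hp₀ : p₀ ∈ Set.Ioo (0 : ℝ) 1)
    (hp₁ : p₁ ∈ Set.Ioo (0 : ℝ) 1) :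
    ∃ P : Bool → Bool → Fin 3 → ℝ,
      (∀ y t u, 0 ≤ P y t u) ∧
      (∑ y : Bool, ∑ t : Bool, ∑ u : Fin 3, P y t u = 1) ∧
      (∀ t, 0 < mT P t) ∧ (∀ t u, 0 < mTU P t u) ∧
      -- (i) P(T = 1) = π
      mT P true = π ∧
      -- (ii) P(Y = 1 | T = t) = p_t
      pY1gT P false = p₀ ∧ pY1gT P true = p₁ ∧
      -- (iii) RR_{UY|S=1} = r_Y and RR_{TU|S=1} = r_T
      max
        ((univ.sup' univ_nonempty (pY1gTU P true)) /
          (univ.inf' univ_nonempty (pY1gTU P true)))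
        ((univ.sup' univ_nonempty (pY1gTU P false)) /
          (univ.inf' univ_nonempty (pY1gTU P false))) = rY ∧
      univ.sup' univ_nonempty
        (fun u : Fin 3 => pUgT P true u / pUgT P false u) = rT := by
  obtain ⟨l, hl, hlp, hpl, hl1⟩ := exists_pos_lt_lt_mul_lt_one hp₁ hrY
  obtain ⟨a, b, ha, hb, hab, hmean⟩ : p₁ ∈ openSegment ℝ l (rY * l) := by
    rw [openSegment_eq_Ioo (hlp.trans hpl)]; exact ⟨hlp, hpl⟩
  set s : Bool → ℝ := fun t => bif t then 1 / 2 else 1 / 2 / rT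
  set m : Bool → ℝ := fun t => bif t then π else 1 - π
  set g : Bool → Fin 3 → ℝ := fun t => mix3 a b (s t)
  set q : Bool → Fin 3 → ℝ := fun t => bif t then ![l, rY * l, p₁] else fun _ => p₀
  have hm : ∀ t, 0 < m t := by simp [m, Bool.forall_bool, hπ.1, hπ.2]
  have hs : ∀ t, s t ∈ Set.Ioo (0 : ℝ) 1 := by
    rw [Bool.forall_bool]
    exact ⟨⟨div_pos one_half_pos (by linarith), (div_lt_self one_half_pos hrT).trans
      one_half_lt_one⟩, one_half_pos, one_half_lt_one⟩
  have hg : ∀ t, ∑ u, g t u = 1 := fun t => sum_mix3 hab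
  have hgpos : ∀ t u, 0 < g t u := fun t => mix3_pos ha hb (hs t)
  have hq : ∀ t u, q t u ∈ Set.Icc (0 : ℝ) 1 := by
    rw [Bool.forall_bool]
    refine ⟨fun _ => Set.Ioo_subset_Icc_self hp₀, fun u => ?_⟩
    fin_cases u <;> simp only [q, cond_true, Fin.zero_eta, Fin.mk_one, Fin.reduceFinMk,
      Matrix.cons_val_zero, Matrix.cons_val_one, Matrix.cons_val]
    exacts [⟨hl.le, by linarith⟩, ⟨by linarith [hp₁.1], hl1.le⟩, Set.Ioo_subset_Icc_self hp₁]
  have hY : ∀ t, pY1gTU (ofConditionals m g q) t = q t := fun t =>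
    funext fun u => pY1gTU_ofConditionals (mul_pos (hm t) (hgpos t u)).ne'
  obtain ⟨hnonneg, hsum, hmT, hmTU⟩ :=
    ofConditionals_isPMF_of_pos hm (by simp [m]) hgpos hg hq
  refine ⟨_, hnonneg, hsum, hmT, hmTU, mT_ofConditionals hg true, ?_, ?_, ?_, ?_⟩
  · simp [pY1gT_ofConditionals hg (hm false).ne', q, ← sum_mul, hg]
  · rw [pY1gT_ofConditionals hg (hm true).ne']
    exact sum_mix3_mul hmean
  · rw [hY, hY]
    simp [q, sup'_vecCons_div_inf'_vecCons hl hlp.le hpl.le, div_self hp₀.1.ne', hrY.le]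
  · simp_rw [pUgT_ofConditionals hg (hm _).ne']
    exact sup'_mix3_div_mix3 ha hb (hs true) hrT
end

section
/- Let r_Y > 1, r_T > 1, p₀, p₁ ∈ (0,1), and set B := r_Y·r_T/(r_Y + r_T − 1). Assume B ≤ 1/p₀. Then there exist, for t ∈ {0,1}, probability vectors (w_{t,u})_{u∈{0,1}} (w_{t,u} ≥ 0, w_{t,0} + w_{t,1} = 1, with w_{0,u} > 0 for both u) and numbers a_{t,u} ∈ (0,1], such that: (i) Σ_u a_{t,u}·w_{t,u} = p_t for t = 0,1 (the observed conditional outcome probabilities are recovered); (ii) max_{t∈{0,1}} (max_u a_{t,u})/(min_u a_{t,u}) = r_Y, i.e. RR_{UY|S=1} = r_Y; (iii) max_u w_{1,u}/w_{0,u} = r_T, i.e. RR_{TU|S=1} = r_T; and (iv) for every π ∈ [0,1], setting w_u := π·w_{1,u} + (1−π)·w_{0,u}, one has (Σ_u a_{1,u}·w_u)/(Σ_u a_{0,u}·w_u) = (p₁/p₀)/B. That is, the selection bias for the relative risk in the subpopulation, β_R^{obs}/β_{R_S}, equals the SV bound BF_U = B, so the SV bound for β_{R_S} is sharp whenever BF_U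 ≤ 1/P(Y=1|T=0,I_S=1). -/
/-- Sharpness of the SV bound for the relative risk in the subpopulation:
if `B = r_Y·r_T/(r_Y + r_T − 1) ≤ 1/p₀`, there is a distribution
(`w t u = P(U=u|T=t,I_S=1)`, `a t u = P(Y=1|T=t,U=u,I_S=1)`, with `u` ranging
over `{0,1}` encoded by `Bool`) recovering the observed outcome probabilities
`p₁, p₀`, whose sensitivity parameters equal `r_Y`, `r_T`, and for which the
selection bias `β_R^{obs}/β_{R_S}` equals the SV bound `BF_U = B` for every
treatment prevalence `π ∈ [0,1]`. -/
theorem stmt7 (rY rT p₀ p₁ : ℝ) (hrY : 1 < rY) (hrT : 1 < rT)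
    (hp₀ : p₀ ∈ Set.Ioo (0 : ℝ) 1) (hp₁ : p₁ ∈ Set.Ioo (0 : ℝ) 1)
    (hB : rY * rT / (rY + rT - 1) ≤ 1 / p₀) :
    ∃ w a : Bool → Bool → ℝ,
      (∀ t u, 0 ≤ w t u) ∧ (∀ t, ∑ u : Bool, w t u = 1) ∧
      (∀ u, 0 < w false u) ∧
      (∀ t u, a t u ∈ Set.Ioc (0 : ℝ) 1) ∧
      -- (i) observed conditional outcome probabilities are recovered
      (∑ u : Bool, a true u * w true u = p₁) ∧
      (∑ u : Bool, a false u * w false u = p₀) ∧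
      -- (ii) RR_{UY|S=1} = r_Y
      max
        (max (a true true) (a true false) / min (a true true) (a true false))
        (max (a false true) (a false false) / min (a false true) (a false false))
        = rY ∧
      -- (iii) RR_{TU|S=1} = r_T
      max (w true true / w false true) (w true false / w false false) = rT ∧
      -- (iv) the bias equals the SV bound for every π ∈ [0,1]
      (∀ π ∈ Set.Icc (0 : ℝ) 1,
        (∑ u : Bool, a true u * (π * w true u + (1 - π) * w false u)) /
          (∑ u : Bool, a false u * (π * w true u + (1 - π) * w false u)) =
        (p₁ / p₀) / (rY * rT / (rY + rT - 1))) := by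
  obtain ⟨hp₀0, hp₀1⟩ := hp₀
  obtain ⟨hp₁0, hp₁1⟩ := hp₁
  have hS : (0 : ℝ) < rY + rT - 1 := by linarith
  have hrT0 : (0 : ℝ) < rT := by linarith
  have hrY0 : (0 : ℝ) < rY := by linarith
  have hB' : p₀ * (rY * rT) ≤ rY + rT - 1 := by
    rw [div_le_div_iff₀ hS hp₀0] at hB
    nlinarith
  have hinv : rT⁻¹ < 1 := by rw [inv_lt_one_iff₀]; right; exact hrT
  have hinv0 : 0 < rT⁻¹ := by positivity
  refine ⟨fun t u => match t, u with
      | true, true => 1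
      | true, false => 0
      | false, true => 1/rT
      | false, false => 1 - 1/rT,
    fun t u => match t, u with
      | true, true => p₁
      | true, false => p₁/rY
      | false, true => p₀*rY*rT/(rY+rT-1)
      | false, false => p₀*rT/(rY+rT-1),
    ?_, ?_, ?_, ?_, ?_, ?_, ?_, ?_, ?_⟩
  · rintro (_|_) (_|_) <;> simp <;> linarith
  · rintro (_|_) <;> simp [Fintype.sum_bool]
  · rintro (_|_) <;> simp <;> linarith
  · rintro (_|_) (_|_) <;> simp [Set.mem_Ioc] <;> constructor
    · positivity
    · rw [div_le_one hS]; nlinarith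
    · positivity
    · rw [div_le_one hS]; nlinarith
    · positivity
    · rw [div_le_one hrY0]; nlinarith
    · exact hp₁0
    · exact le_of_lt hp₁1
  · rw [Fintype.sum_bool]; show p₁ * 1 + p₁/rY * 0 = p₁; ring
  · rw [Fintype.sum_bool]
    show p₀*rY*rT/(rY+rT-1) * (1/rT) + p₀*rT/(rY+rT-1) * (1 - 1/rT) = p₀
    field_simp; ring
  · show max (max p₁ (p₁/rY) / min p₁ (p₁/rY))
        (max (p₀*rY*rT/(rY+rT-1)) (p₀*rT/(rY+rT-1)) /
          min (p₀*rY*rT/(rY+rT-1)) (p₀*rT/(rY+rT-1))) = rY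
    have h1 : min p₁ (p₁/rY) = p₁/rY := by
      apply min_eq_right; rw [div_le_iff₀ hrY0]; nlinarith
    have h2 : max p₁ (p₁/rY) = p₁ := by
      apply max_eq_left; rw [div_le_iff₀ hrY0]; nlinarith
    have hle : p₀*rT/(rY+rT-1) ≤ p₀*rY*rT/(rY+rT-1) := by
      gcongr
      nlinarith [mul_pos hp₀0 hrT0]
    have h3 : min (p₀*rY*rT/(rY+rT-1)) (p₀*rT/(rY+rT-1)) = p₀*rT/(rY+rT-1) :=
      min_eq_right hle
    have h4 : max (p₀*rY*rT/(rY+rT-1)) (p₀*rT/(rY+rT-1)) = p₀*rY*rT/(rY+rT-1) :=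
      max_eq_left hle
    rw [h1, h2, h3, h4]
    have e1 : p₁ / (p₁/rY) = rY := by field_simp
    have e2 : (p₀*rY*rT/(rY+rT-1)) / (p₀*rT/(rY+rT-1)) = rY := by
      rw [div_eq_iff (by positivity)]; ring
    rw [e1, e2, max_self]
  · show max ((1:ℝ) / (1/rT)) ((0:ℝ) / (1 - 1/rT)) = rT
    rw [one_div_one_div, zero_div]
    exact max_eq_left hrT0.le
  · rintro π ⟨hπ0, hπ1⟩
    rw [Fintype.sum_bool, Fintype.sum_bool]
    show (p₁ * (π * 1 + (1 - π) * (1/rT)) + p₁/rY * (π * 0 + (1 - π) * (1 - 1/rT))) /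
      (p₀*rY*rT/(rY+rT-1) * (π * 1 + (1 - π) * (1/rT)) +
        p₀*rT/(rY+rT-1) * (π * 0 + (1 - π) * (1 - 1/rT))) = (p₁ / p₀) / (rY * rT / (rY + rT - 1))
    have hK : 0 < rY * rT * π + (1 - π) * (rY + rT - 1) := by
      nlinarith [mul_nonneg hπ0 (by nlinarith : (0:ℝ) ≤ rY * rT - (rY + rT - 1))]
    have hDeq : p₀*rY*rT/(rY+rT-1) * (π * 1 + (1 - π) * (1/rT)) +
        p₀*rT/(rY+rT-1) * (π * 0 + (1 - π) * (1 - 1/rT)) =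
        p₀ / (rY+rT-1) * (rY * rT * π + (1 - π) * (rY + rT - 1)) := by
      field_simp; ring
    have hD : 0 < p₀*rY*rT/(rY+rT-1) * (π * 1 + (1 - π) * (1/rT)) +
        p₀*rT/(rY+rT-1) * (π * 0 + (1 - π) * (1 - 1/rT)) := by
      rw [hDeq]; positivity
    rw [div_eq_div_iff (ne_of_gt hD) (by positivity : (rY * rT / (rY + rT - 1)) ≠ 0)]
    field_simp
end

section
/- Let r_Y > 1, r_T > 1, p₀, p₁ ∈ (0,1), π ∈ [0,1], and set B := r_Y·r_T/(r_Y + r_T − 1). Define the sharpness construction: w_{1,1} = 1, w_{1,0} = 0, w_{0,1} = 1/r_T, w_{0,0} = 1 − 1/r_T, and a_{0,0} = p₀·B/r_Y, a_{0,1} = p₀·B, a_{1,0} = p₁/r_Y, a_{1,1} = p₁. Setting w_u := π·w_{1,u} + (1−π)·w_{0,u} for u ∈ {0,1}, the standardized counterfactual risks satisfy Σ_u a_{1,u}·w_u = p₁·(π + (1−π)/B) and Σ_u a_{0,u}·w_u = p₀·B·(π + (1−π)/B); consequently their ratio equals p₁/(p₀·B). -/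
/-- Under the sharpness construction for the subpopulation
(`w t u = P(U=u|T=t,I_S=1)`, `a t u = P(Y=1|T=t,U=u,I_S=1)`, `u ∈ {0,1}`
encoded by `Bool` with `true = 1`), the standardized counterfactual risks
satisfy `Σ_u a_{1,u}·w_u = p₁·(π + (1−π)/B)` and
`Σ_u a_{0,u}·w_u = p₀·B·(π + (1−π)/B)`, hence their ratio is `p₁/(p₀·B)`. -/
theorem stmt8 (rY rT p₀ p₁ π B : ℝ) (hrY : 1 < rY) (hrT : 1 < rT)
    (hp₀ : p₀ ∈ Set.Ioo (0 : ℝ) 1) (hp₁ : p₁ ∈ Set.Ioo (0 : ℝ) 1)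
    (hπ : π ∈ Set.Icc (0 : ℝ) 1)
    (hB : B = rY * rT / (rY + rT - 1))
    (w a : Bool → Bool → ℝ)
    (hw11 : w true true = 1) (hw10 : w true false = 0)
    (hw01 : w false true = 1 / rT) (hw00 : w false false = 1 - 1 / rT)
    (ha00 : a false false = p₀ * B / rY) (ha01 : a false true = p₀ * B)
    (ha10 : a true false = p₁ / rY) (ha11 : a true true = p₁) :
    (∑ u : Bool, a true u * (π * w true u + (1 - π) * w false u)) =
      p₁ * (π + (1 - π) / B) ∧
    (∑ u : Bool, a false u * (π * w true u + (1 - π) * w false u)) =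
      p₀ * B * (π + (1 - π) / B) ∧
    (∑ u : Bool, a true u * (π * w true u + (1 - π) * w false u)) /
      (∑ u : Bool, a false u * (π * w true u + (1 - π) * w false u)) =
      p₁ / (p₀ * B) := by
  have hrY0 : (0:ℝ) < rY := lt_trans one_pos hrY
  have hrT0 : (0:ℝ) < rT := lt_trans one_pos hrT
  have hd : (0:ℝ) < rY + rT - 1 := by linarith
  have hB0 : 0 < B := by rw [hB]; positivity
  have hfac : 0 < π + (1 - π) / B := by
    rcases hπ with ⟨h0, h1⟩
    rcases eq_or_lt_of_le h1 with h | h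
    · rw [← h]; norm_num; positivity
    · have : 0 < (1 - π) / B := div_pos (by linarith) hB0
      linarith
  have h1 : (∑ u : Bool, a true u * (π * w true u + (1 - π) * w false u)) =
      p₁ * (π + (1 - π) / B) := by
    simp [Fintype.sum_bool, hw11, hw10, hw01, hw00, ha10, ha11, hB]
    field_simp
    ring
  have h0 : (∑ u : Bool, a false u * (π * w true u + (1 - π) * w false u)) =
      p₀ * B * (π + (1 - π) / B) := by
    simp [Fintype.sum_bool, hw11, hw10, hw01, hw00, ha00, ha01, hB]
    field_simp
    ring
  refine ⟨h1, h0, ?_⟩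
  rw [h1, h0]
  rw [mul_div_mul_right _ _ (ne_of_gt hfac)]
end

section
/- Let r_Y > 1, r_T > 1, p₀, p₁ ∈ (0,1), and set B := r_Y·r_T/(r_Y + r_T − 1). Under the sharpness construction w_{1,1} = 1, w_{1,0} = 0, w_{0,1} = 1/r_T, w_{0,0} = 1 − 1/r_T, a_{0,0} = p₀·B/r_Y, a_{0,1} = p₀·B, a_{1,0} = p₁/r_Y, a_{1,1} = p₁, define β⁺ := p₁ − Σ_u a_{0,u}·w_{1,u} and β⁻ := Σ_u a_{1,u}·w_{0,u} − p₀, and β_D^{obs} := p₁ − p₀. Then β_D^{obs} − β⁺ = p₀·(B − 1) and β_D^{obs} − β⁻ = p₁·(1 − 1/B). -/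
/-- Under the sharpness construction for the subpopulation
(`w t u = P(U=u|T=t,I_S=1)`, `a t u = P(Y=1|T=t,U=u,I_S=1)`, `u ∈ {0,1}`
encoded by `Bool` with `true = 1`), the extreme standardized risk differences
`β⁺ = p₁ − Σ_u a_{0,u}·w_{1,u}` and `β⁻ = Σ_u a_{1,u}·w_{0,u} − p₀` satisfy
`β_D^{obs} − β⁺ = p₀·(B − 1)` and `β_D^{obs} − β⁻ = p₁·(1 − 1/B)`,
where `β_D^{obs} = p₁ − p₀`. -/
theorem stmt9 (rY rT p₀ p₁ B : ℝ) (hrY : 1 < rY) (hrT : 1 < rT)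
    (hp₀ : p₀ ∈ Set.Ioo (0 : ℝ) 1) (hp₁ : p₁ ∈ Set.Ioo (0 : ℝ) 1)
    (hB : B = rY * rT / (rY + rT - 1))
    (w a : Bool → Bool → ℝ)
    (hw11 : w true true = 1) (hw10 : w true false = 0)
    (hw01 : w false true = 1 / rT) (hw00 : w false false = 1 - 1 / rT)
    (ha00 : a false false = p₀ * B / rY) (ha01 : a false true = p₀ * B)
    (ha10 : a true false = p₁ / rY) (ha11 : a true true = p₁)
    (βplus βminus βDobs : ℝ)
    (hβplus : βplus = p₁ - ∑ u : Bool, a false u * w true u)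
    (hβminus : βminus = (∑ u : Bool, a true u * w false u) - p₀)
    (hβDobs : βDobs = p₁ - p₀) :
    βDobs - βplus = p₀ * (B - 1) ∧ βDobs - βminus = p₁ * (1 - 1 / B) := by
  have hrY0 : rY ≠ 0 := by linarith
  have hrT0 : rT ≠ 0 := by linarith
  have hden : rY + rT - 1 ≠ 0 := by nlinarith
  have hB0 : B ≠ 0 := by
    rw [hB]
    positivity
  subst hβplus hβminus hβDobs hB
  simp [Fintype.sum_bool, hw11, hw10, hw01, hw00, ha00, ha01, ha10, ha11]
  constructor <;> field_simp <;> ring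
end

section
/- Let r_Y > 1, r_T > 1, p₀, p₁ ∈ (0,1), and set B := r_Y·r_T/(r_Y + r_T − 1). Assume B ≤ 1/p₀. Then there exist π ∈ [0,1] and, for t ∈ {0,1}, probability vectors (w_{t,u})_{u∈{0,1}} with w_{0,u} > 0 for both u, and numbers a_{t,u} ∈ (0,1], such that: (i) Σ_u a_{t,u}·w_{t,u} = p_t for t = 0,1; (ii) max_{t∈{0,1}} (max_u a_{t,u})/(min_u a_{t,u}) = r_Y and max_u w_{1,u}/w_{0,u} = r_T; and (iii) setting w_u := π·w_{1,u} + (1−π)·w_{0,u} and β_{D_S} := Σ_u (a_{1,u} − a_{0,u})·w_u, the selection bias satisfies (p₁ − p₀) − β_{D_S} = max[ p₀·(B − 1), p₁·(1 − 1/B) ]. That is, the SV bound for the risk difference in the subpopulation is sharp whenever BF_U ≤ 1/P(Y=1|T=0,I_S=1). -/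
/-- Sharpness of the SV bound for the risk difference in the subpopulation:
if `B = r_Y·r_T/(r_Y + r_T − 1) ≤ 1/p₀`, there exist `π ∈ [0,1]` and a
distribution (`w t u = P(U=u|T=t,I_S=1)`, `a t u = P(Y=1|T=t,U=u,I_S=1)`,
`u ∈ {0,1}` encoded by `Bool`) recovering the observed outcome probabilities,
with sensitivity parameters equal to `r_Y` and `r_T`, for which the selection
bias `(p₁ − p₀) − β_{D_S}` equals the SV bound
`max[p₀·(B − 1), p₁·(1 − 1/B)]`. -/
theorem stmt10 (rY rT p₀ p₁ : ℝ) (hrY : 1 < rY) (hrT : 1 < rT)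
    (hp₀ : p₀ ∈ Set.Ioo (0 : ℝ) 1) (hp₁ : p₁ ∈ Set.Ioo (0 : ℝ) 1)
    (hB : rY * rT / (rY + rT - 1) ≤ 1 / p₀) :
    ∃ (π : ℝ) (w a : Bool → Bool → ℝ),
      π ∈ Set.Icc (0 : ℝ) 1 ∧
      (∀ t u, 0 ≤ w t u) ∧ (∀ t, ∑ u : Bool, w t u = 1) ∧
      (∀ u, 0 < w false u) ∧
      (∀ t u, a t u ∈ Set.Ioc (0 : ℝ) 1) ∧
      -- (i) observed conditional outcome probabilities are recovered
      (∑ u : Bool, a true u * w true u = p₁) ∧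
      (∑ u : Bool, a false u * w false u = p₀) ∧
      -- (ii) RR_{UY|S=1} = r_Y and RR_{TU|S=1} = r_T
      max
        (max (a true true) (a true false) / min (a true true) (a true false))
        (max (a false true) (a false false) / min (a false true) (a false false))
        = rY ∧
      max (w true true / w false true) (w true false / w false false) = rT ∧
      -- (iii) the selection bias attains the SV bound
      (p₁ - p₀) -
        (∑ u : Bool, (a true u - a false u) *
          (π * w true u + (1 - π) * w false u)) =
        max (p₀ * (rY * rT / (rY + rT - 1) - 1))
          (p₁ * (1 - 1 / (rY * rT / (rY + rT - 1)))) := by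
  obtain ⟨hp₀0, hp₀1⟩ := hp₀
  obtain ⟨hp₁0, hp₁1⟩ := hp₁
  have hD : (0:ℝ) < rY + rT - 1 := by linarith
  have hrT0 : (0:ℝ) < rT := by linarith
  have hrY0 : (0:ℝ) < rY := by linarith
  have hDne : rY + rT - 1 ≠ 0 := ne_of_gt hD
  have hrTne : rT ≠ 0 := ne_of_gt hrT0
  have hrYne : rY ≠ 0 := ne_of_gt hrY0
  have hp₀ne : p₀ ≠ 0 := ne_of_gt hp₀0
  have hp₁ne : p₁ ≠ 0 := ne_of_gt hp₁0
  have hBp : rY * rT * p₀ ≤ rY + rT - 1 := by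
    rw [div_le_div_iff₀ hD hp₀0] at hB
    linarith
  set w : Bool → Bool → ℝ := fun t u =>
    if t then (if u then 1 else 0) else (if u then 1/rT else 1 - 1/rT) with hw
  have hw_nonneg : ∀ t u, 0 ≤ w t u := by
    intro t u
    cases t <;> cases u <;>
      simp [hw, hrT0.le, inv_le_one_of_one_le₀ hrT.le]
  have hw_sum : ∀ t, ∑ u : Bool, w t u = 1 := by
    intro t; cases t <;> simp [hw]
  have hwf_pos : ∀ u, 0 < w false u := by
    intro u; cases u <;> simp [hw]
    · exact inv_lt_one_of_one_lt₀ hrT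
    · positivity
  have hwratio : max (w true true / w false true) (w true false / w false false) = rT := by
    have h1 : w true true / w false true = rT := by simp [hw]
    have h2 : w true false / w false false = 0 := by simp [hw]
    rw [h1, h2]; exact max_eq_left (le_of_lt hrT0)
  rcases le_total (p₁ * (1 - 1 / (rY * rT / (rY + rT - 1))))
      (p₀ * (rY * rT / (rY + rT - 1) - 1)) with hc | hc
  · -- case: bound is p₀(B-1); π = 1, a true constant
    refine ⟨1, w, fun t u => if t then p₁ else
      (if u then rY * rT * p₀ / (rY + rT - 1) else rT * p₀ / (rY + rT - 1)),
      ⟨le_of_lt one_pos, le_refl 1⟩, hw_nonneg, hw_sum, hwf_pos, ?_, ?_, ?_, ?_, hwratio, ?_⟩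
    · intro t u
      cases t <;> cases u <;> simp <;> constructor
      · positivity
      · rw [div_le_one hD]; nlinarith
      · positivity
      · rw [div_le_one hD]; exact hBp
      · exact hp₁0
      · exact le_of_lt hp₁1
      · exact hp₁0
      · exact le_of_lt hp₁1
    · simp [hw]
    · simp only [hw, Fintype.sum_bool, if_true, if_false, Bool.false_eq_true]
      field_simp
      ring
    · simp only [if_true, if_false, Bool.false_eq_true]
      have h1 : max p₁ p₁ / min p₁ p₁ = 1 := by
        simp [div_self hp₁ne]
      have hle : rT * p₀ / (rY + rT - 1) ≤ rY * rT * p₀ / (rY + rT - 1) := by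
        gcongr; nlinarith
      rw [h1, max_eq_left hle, min_eq_right hle]
      have hdiv : rY * rT * p₀ / (rY + rT - 1) / (rT * p₀ / (rY + rT - 1)) = rY := by
        field_simp
      rw [hdiv]
      exact max_eq_right (le_of_lt hrY)
    · rw [max_eq_left hc]
      simp only [hw, Fintype.sum_bool, if_true, if_false, Bool.false_eq_true]
      field_simp
      ring
  · -- case: bound is p₁(1-1/B); π = 0, a false constant
    refine ⟨0, w, fun t u => if t then (if u then p₁ else p₁ / rY) else p₀,
      ⟨le_refl 0, le_of_lt one_pos⟩, hw_nonneg, hw_sum, hwf_pos, ?_, ?_, ?_, ?_, hwratio, ?_⟩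
    · intro t u
      cases t <;> cases u <;> simp <;> constructor
      · exact hp₀0
      · exact le_of_lt hp₀1
      · exact hp₀0
      · exact le_of_lt hp₀1
      · positivity
      · rw [div_le_one hrY0]; linarith
      · exact hp₁0
      · exact le_of_lt hp₁1
    · simp [hw]
    · simp only [hw, Fintype.sum_bool, if_true, if_false, Bool.false_eq_true]
      field_simp
      ring
    · simp only [if_true, if_false, Bool.false_eq_true]
      have h1 : max p₀ p₀ / min p₀ p₀ = 1 := by
        simp [div_self hp₀ne]
      have hle : p₁ / rY ≤ p₁ := by
        rw [div_le_iff₀ hrY0]; nlinarith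
      rw [h1, max_eq_left hle, min_eq_right hle]
      have hdiv : p₁ / (p₁ / rY) = rY := by field_simp
      rw [hdiv]
      exact max_eq_left (le_of_lt hrY)
    · rw [max_eq_right hc]
      simp only [hw, Fintype.sum_bool, if_true, if_false, Bool.false_eq_true]
      field_simp
      ring
end

section
/- Let Y, T, S be {0,1}-valued random variables with a joint distribution such that P(T=t, S=s) > 0 for all t,s ∈ {0,1} and P(Y=1|T=t, S=s) > 0 for all t,s. Then P(Y=1|T=1)/P(Y=1|T=0) ≥ (min_{s∈{0,1}} P(Y=1|T=1,S=s)) / (max_{s∈{0,1}} P(Y=1|T=0,S=s)). Moreover, if P(Y=1|T=t,S=1) ≠ P(Y=1|T=t,S=0) for both t = 0 and t = 1, then the inequality is strict. -/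
/-
`P(Y=1|T=t)` is the average of `P(Y=1|T=t,S=s)` over `s`, weighted by `P(T=t,S=s) > 0`, so it
lies between the minimum and the maximum of these two values, strictly between them when they
differ. Bounding the numerator of `β_R` from below by the minimum and its denominator from above
by the maximum gives the inequality.
-/

/-- `P y t s` is the joint pmf of `(Y, T, S)` (with `true` encoding `1`);
`pYgT P t` is `P(Y = 1 | T = t)`. -/
noncomputable def pYgT (P : Bool → Bool → Bool → ℝ) (t : Bool) : ℝ :=
  (∑ s : Bool, P true t s) / (∑ y : Bool, ∑ s : Bool, P y t s)

/-- `pYgTS P t s` is `P(Y = 1 | T = t, S = s)`. -/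
noncomputable def pYgTS (P : Bool → Bool → Bool → ℝ) (t s : Bool) : ℝ :=
  P true t s / (∑ y : Bool, P y t s)

section WeightedMean

variable {α : Type*} [Field α] [LinearOrder α] [IsStrictOrderedRing α] {a b u v : α}

lemma mul_add_mul_div_add_mem_Icc (hu : 0 < u) (hv : 0 < v) :
    (a * u + b * v) / (u + v) ∈ Set.Icc (min a b) (max a b) := by
  have huv : 0 < u + v := add_pos hu hv
  rw [Set.mem_Icc, le_div_iff₀ huv, div_le_iff₀ huv]
  rcases le_total a b with h | h
  · rw [min_eq_left h, max_eq_right h]; constructor <;> nlinarith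
  · rw [min_eq_right h, max_eq_left h]; constructor <;> nlinarith

lemma mul_add_mul_div_add_mem_Ioo (hu : 0 < u) (hv : 0 < v) (hab : a ≠ b) :
    (a * u + b * v) / (u + v) ∈ Set.Ioo (min a b) (max a b) := by
  have huv : 0 < u + v := add_pos hu hv
  rw [Set.mem_Ioo, lt_div_iff₀ huv, div_lt_iff₀ huv]
  rcases hab.lt_or_gt with h | h
  · rw [min_eq_left h.le, max_eq_right h.le]; constructor <;> nlinarith
  · rw [min_eq_right h.le, max_eq_left h.le]; constructor <;> nlinarith

end WeightedMean

section TotalProbability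

variable {P : Bool → Bool → Bool → ℝ}

lemma pYgT_eq_weighted_mean (hTS : ∀ t s, 0 < ∑ y : Bool, P y t s) (t : Bool) :
    pYgT P t =
      (pYgTS P t true * (∑ y : Bool, P y t true) +
        pYgTS P t false * (∑ y : Bool, P y t false)) /
      ((∑ y : Bool, P y t true) + (∑ y : Bool, P y t false)) := by
  rw [pYgTS, pYgTS, div_mul_cancel₀ _ (hTS t true).ne', div_mul_cancel₀ _ (hTS t false).ne']
  simp only [pYgT, Fintype.sum_bool]
  ring

lemma pYgT_mem_Icc (hTS : ∀ t s, 0 < ∑ y : Bool, P y t s) (t : Bool) :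
    pYgT P t ∈ Set.Icc (min (pYgTS P t true) (pYgTS P t false))
      (max (pYgTS P t true) (pYgTS P t false)) :=
  pYgT_eq_weighted_mean hTS t ▸ mul_add_mul_div_add_mem_Icc (hTS t true) (hTS t false)

lemma pYgT_mem_Ioo (hTS : ∀ t s, 0 < ∑ y : Bool, P y t s) {t : Bool}
    (hne : pYgTS P t true ≠ pYgTS P t false) :
    pYgT P t ∈ Set.Ioo (min (pYgTS P t true) (pYgTS P t false))
      (max (pYgTS P t true) (pYgTS P t false)) :=
  pYgT_eq_weighted_mean hTS t ▸ mul_add_mul_div_add_mem_Ioo (hTS t true) (hTS t false) hne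

end TotalProbability

theorem stmt12_general (P : Bool → Bool → Bool → ℝ)
    (hTS : ∀ t s, 0 < ∑ y : Bool, P y t s)
    (hY : ∀ t s, 0 < pYgTS P t s) :
    min (pYgTS P true true) (pYgTS P true false) /
        max (pYgTS P false true) (pYgTS P false false) ≤
      pYgT P true / pYgT P false ∧
    ((∀ t, pYgTS P t true ≠ pYgTS P t false) →
      min (pYgTS P true true) (pYgTS P true false) /
          max (pYgTS P false true) (pYgTS P false false) <
        pYgT P true / pYgT P false) := by
  have hmin_pos : ∀ t, 0 < min (pYgTS P t true) (pYgTS P t false) :=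
    fun t => lt_min (hY t true) (hY t false)
  have hpYgT_pos : ∀ t, 0 < pYgT P t :=
    fun t => (hmin_pos t).trans_le (pYgT_mem_Icc hTS t).1
  refine ⟨div_le_div₀ (hpYgT_pos true).le (pYgT_mem_Icc hTS true).1 (hpYgT_pos false)
    (pYgT_mem_Icc hTS false).2, fun hne => ?_⟩
  exact div_lt_div₀ (pYgT_mem_Ioo hTS (hne true)).1 (pYgT_mem_Ioo hTS (hne false)).2.le
    (hpYgT_pos true).le (hpYgT_pos false)

/-- `P(Y=1|T=1)/P(Y=1|T=0) ≥ (min_s P(Y=1|T=1,S=s))/(max_s P(Y=1|T=0,S=s))`,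
and the inequality is strict if `P(Y=1|T=t,S=1) ≠ P(Y=1|T=t,S=0)` for both
`t = 0, 1`. -/
theorem stmt12 (P : Bool → Bool → Bool → ℝ)
    (hpos : ∀ y t s, 0 ≤ P y t s)
    (hsum : ∑ y : Bool, ∑ t : Bool, ∑ s : Bool, P y t s = 1)
    (hTS : ∀ t s, 0 < ∑ y : Bool, P y t s)
    (hY : ∀ t s, 0 < pYgTS P t s) :
    min (pYgTS P true true) (pYgTS P true false) /
        max (pYgTS P false true) (pYgTS P false false) ≤
      pYgT P true / pYgT P false ∧
    ((∀ t, pYgTS P t true ≠ pYgTS P t false) →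
      min (pYgTS P true true) (pYgTS P true false) /
          max (pYgTS P false true) (pYgTS P false false) <
        pYgT P true / pYgT P false) :=
  stmt12_general P hTS hY
end

section
/- Let Y, T, S be {0,1}-valued random variables with a joint distribution such that P(T=t, S=s) > 0 for all t,s ∈ {0,1}. Then P(Y=1|T=1) − P(Y=1|T=0) ≥ (min_{s∈{0,1}} P(Y=1|T=1,S=s)) − (max_{s∈{0,1}} P(Y=1|T=0,S=s)). Moreover, if P(Y=1|T=t,S=1) ≠ P(Y=1|T=t,S=0) for both t = 0 and t = 1, then the inequality is strict. -/
private lemma min_le_mediant (a1 a0 b1 b0 : ℝ) (h1 : 0 < b1) (h0 : 0 < b0) :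
    min (a1 / b1) (a0 / b0) ≤ (a1 + a0) / (b1 + b0) := by
  rw [le_div_iff₀ (by linarith)]
  have A : min (a1 / b1) (a0 / b0) * b1 ≤ a1 := by
    rw [← le_div_iff₀ h1]; exact min_le_left _ _
  have B : min (a1 / b1) (a0 / b0) * b0 ≤ a0 := by
    rw [← le_div_iff₀ h0]; exact min_le_right _ _
  nlinarith [A, B]

private lemma min_lt_mediant (a1 a0 b1 b0 : ℝ) (h1 : 0 < b1) (h0 : 0 < b0)
    (hne : a1 / b1 ≠ a0 / b0) :
    min (a1 / b1) (a0 / b0) < (a1 + a0) / (b1 + b0) := by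
  rw [lt_div_iff₀ (by linarith)]
  rcases lt_or_gt_of_ne hne with h | h
  · have A : min (a1 / b1) (a0 / b0) * b1 ≤ a1 := by
      rw [← le_div_iff₀ h1]; exact min_le_left _ _
    have B : min (a1 / b1) (a0 / b0) * b0 < a0 := by
      rw [← lt_div_iff₀ h0]; exact lt_of_le_of_lt (min_le_left _ _) h
    nlinarith [A, B]
  · have A : min (a1 / b1) (a0 / b0) * b1 < a1 := by
      rw [← lt_div_iff₀ h1]; exact lt_of_le_of_lt (min_le_right _ _) h
    have B : min (a1 / b1) (a0 / b0) * b0 ≤ a0 := by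
      rw [← le_div_iff₀ h0]; exact min_le_right _ _
    nlinarith [A, B]

private lemma mediant_le_max (a1 a0 b1 b0 : ℝ) (h1 : 0 < b1) (h0 : 0 < b0) :
    (a1 + a0) / (b1 + b0) ≤ max (a1 / b1) (a0 / b0) := by
  rw [div_le_iff₀ (by linarith)]
  have A : a1 ≤ max (a1 / b1) (a0 / b0) * b1 := by
    rw [← div_le_iff₀ h1]; exact le_max_left _ _
  have B : a0 ≤ max (a1 / b1) (a0 / b0) * b0 := by
    rw [← div_le_iff₀ h0]; exact le_max_right _ _
  nlinarith [A, B]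

private lemma mediant_lt_max (a1 a0 b1 b0 : ℝ) (h1 : 0 < b1) (h0 : 0 < b0)
    (hne : a1 / b1 ≠ a0 / b0) :
    (a1 + a0) / (b1 + b0) < max (a1 / b1) (a0 / b0) := by
  rw [div_lt_iff₀ (by linarith)]
  rcases lt_or_gt_of_ne hne with h | h
  · have A : a1 < max (a1 / b1) (a0 / b0) * b1 := by
      rw [← div_lt_iff₀ h1]; exact lt_of_lt_of_le h (le_max_right _ _)
    have B : a0 ≤ max (a1 / b1) (a0 / b0) * b0 := by
      rw [← div_le_iff₀ h0]; exact le_max_right _ _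
    nlinarith [A, B]
  · have A : a1 ≤ max (a1 / b1) (a0 / b0) * b1 := by
      rw [← div_le_iff₀ h1]; exact le_max_left _ _
    have B : a0 < max (a1 / b1) (a0 / b0) * b0 := by
      rw [← div_lt_iff₀ h0]; exact lt_of_lt_of_le h (le_max_left _ _)
    nlinarith [A, B]

/-- `P(Y=1|T=1) − P(Y=1|T=0) ≥ (min_s P(Y=1|T=1,S=s)) − (max_s P(Y=1|T=0,S=s))`,
and the inequality is strict if `P(Y=1|T=t,S=1) ≠ P(Y=1|T=t,S=0)` for both
`t = 0, 1`. -/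
theorem stmt14 (P : Bool → Bool → Bool → ℝ)
    (hpos : ∀ y t s, 0 ≤ P y t s)
    (hsum : ∑ y : Bool, ∑ t : Bool, ∑ s : Bool, P y t s = 1)
    (hTS : ∀ t s, 0 < ∑ y : Bool, P y t s) :
    min (pYgTS P true true) (pYgTS P true false) -
        max (pYgTS P false true) (pYgTS P false false) ≤
      pYgT P true - pYgT P false ∧
    ((∀ t, pYgTS P t true ≠ pYgTS P t false) →
      min (pYgTS P true true) (pYgTS P true false) -
          max (pYgTS P false true) (pYgTS P false false) <
        pYgT P true - pYgT P false) := by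
  have hb : ∀ t s, 0 < P true t s + P false t s := by
    intro t s; have := hTS t s; simpa [Fintype.sum_bool] using this
  have hTSe : ∀ t s, pYgTS P t s = P true t s / (P true t s + P false t s) := by
    intro t s; simp [pYgTS, Fintype.sum_bool]
  have hTe : ∀ t, pYgT P t =
      (P true t true + P true t false) /
        ((P true t true + P false t true) + (P true t false + P false t false)) := by
    intro t
    simp only [pYgT, Fintype.sum_bool]
    congr 1; ring
  have h1 : min (pYgTS P true true) (pYgTS P true false) ≤ pYgT P true := by
    rw [hTe, hTSe, hTSe]
    exact min_le_mediant _ _ _ _ (hb true true) (hb true false)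
  have h2 : pYgT P false ≤ max (pYgTS P false true) (pYgTS P false false) := by
    rw [hTe, hTSe, hTSe]
    exact mediant_le_max _ _ _ _ (hb false true) (hb false false)
  refine ⟨by linarith, fun hne => ?_⟩
  have h1' : min (pYgTS P true true) (pYgTS P true false) < pYgT P true := by
    rw [hTe, hTSe, hTSe]
    refine min_lt_mediant _ _ _ _ (hb true true) (hb true false) ?_
    have := hne true; rwa [hTSe, hTSe] at this
  have h2' : pYgT P false < max (pYgTS P false true) (pYgTS P false false) := by
    rw [hTe, hTSe, hTSe]
    refine mediant_lt_max _ _ _ _ (hb false true) (hb false false) ?_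
    have := hne false; rwa [hTSe, hTSe] at this
  linarith
end

section
/- Let r₀ > 1, r₁ > 1, and ε ∈ (0,1), and set D := r₀·r₁ − 1. Define vectors indexed by u ∈ {0,1,2}: q⁰⁰ := ((1−ε)·r₀·(r₁−1)/D, (1−ε)·(r₀−1)/D, ε), q⁰¹ := ((1−ε)·(r₁−1)/D, (1−ε)·r₁·(r₀−1)/D, ε), q¹¹ := ((1−ε)·r₁·(r₀−1)/D, (1−ε)·(r₁−1)/D, ε), and q¹⁰ := ((1−ε)·(r₀−1)/D, (1−ε)·r₀·(r₁−1)/D, ε). Then each of q⁰⁰, q⁰¹, q¹¹, q¹⁰ is a probability vector (nonnegative entries summing to 1 with all entries strictly positive), max_{u∈{0,1,2}} q⁰⁰(u)/q⁰¹(u) = r₀, and max_{u∈{0,1,2}} q¹¹(u)/q¹⁰(u) = r₁. -/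
open Finset

/-- In the variation-independence construction for the total population, with
`D = r₀·r₁ − 1`, the four vectors `q⁰⁰, q⁰¹, q¹¹, q¹⁰` on `{0,1,2}` are strictly
positive probability vectors, `max_u q⁰⁰(u)/q⁰¹(u) = r₀` and
`max_u q¹¹(u)/q¹⁰(u) = r₁`. -/
theorem stmt15 (r₀ r₁ ε D : ℝ) (hr₀ : 1 < r₀) (hr₁ : 1 < r₁)
    (hε : ε ∈ Set.Ioo (0 : ℝ) 1) (hD : D = r₀ * r₁ - 1)
    (q00 q01 q11 q10 : Fin 3 → ℝ)
    (h00 : q00 = ![(1 - ε) * r₀ * (r₁ - 1) / D, (1 - ε) * (r₀ - 1) / D, ε])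
    (h01 : q01 = ![(1 - ε) * (r₁ - 1) / D, (1 - ε) * r₁ * (r₀ - 1) / D, ε])
    (h11 : q11 = ![(1 - ε) * r₁ * (r₀ - 1) / D, (1 - ε) * (r₁ - 1) / D, ε])
    (h10 : q10 = ![(1 - ε) * (r₀ - 1) / D, (1 - ε) * r₀ * (r₁ - 1) / D, ε]) :
    (∀ u, 0 < q00 u) ∧ (∀ u, 0 < q01 u) ∧ (∀ u, 0 < q11 u) ∧ (∀ u, 0 < q10 u) ∧
    (∑ u, q00 u = 1) ∧ (∑ u, q01 u = 1) ∧ (∑ u, q11 u = 1) ∧ (∑ u, q10 u = 1) ∧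
    univ.sup' univ_nonempty (fun u => q00 u / q01 u) = r₀ ∧
    univ.sup' univ_nonempty (fun u => q11 u / q10 u) = r₁ := by
  obtain ⟨hε0, hε1⟩ := hε
  have hεc : 0 < 1 - ε := by linarith
  have hr0' : 0 < r₀ - 1 := by linarith
  have hr1' : 0 < r₁ - 1 := by linarith
  have hr0p : 0 < r₀ := by linarith
  have hr1p : 0 < r₁ := by linarith
  have hDpos : 0 < D := by rw [hD]; nlinarith
  have hDne : D ≠ 0 := ne_of_gt hDpos
  have hεcne : (1 - ε) ≠ 0 := ne_of_gt hεc
  have hεne : ε ≠ 0 := ne_of_gt hε0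
  have hr0ne : r₀ - 1 ≠ 0 := ne_of_gt hr0'
  have hr1ne : r₁ - 1 ≠ 0 := ne_of_gt hr1'
  have hr1pne : r₁ ≠ 0 := ne_of_gt hr1p
  have hr0pne : r₀ ≠ 0 := ne_of_gt hr0p
  have e0 : (1 - ε) * r₀ * (r₁ - 1) / D / ((1 - ε) * (r₁ - 1) / D) = r₀ := by
    field_simp
  have e1 : (1 - ε) * (r₀ - 1) / D / ((1 - ε) * r₁ * (r₀ - 1) / D) = 1 / r₁ := by
    field_simp
  have f0 : (1 - ε) * r₁ * (r₀ - 1) / D / ((1 - ε) * (r₀ - 1) / D) = r₁ := by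
    field_simp
  have f1 : (1 - ε) * (r₁ - 1) / D / ((1 - ε) * r₀ * (r₁ - 1) / D) = 1 / r₀ := by
    field_simp
  have hinv0 : 1 / r₁ ≤ r₀ := by
    have : 1 / r₁ < 1 := by rw [div_lt_one hr1p]; exact hr₁
    linarith
  have hinv1 : 1 / r₀ ≤ r₁ := by
    have : 1 / r₀ < 1 := by rw [div_lt_one hr0p]; exact hr₀
    linarith
  subst h00 h01 h11 h10
  refine ⟨?_, ?_, ?_, ?_, ?_, ?_, ?_, ?_, ?_, ?_⟩
  · intro u; fin_cases u <;> simp <;> positivity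
  · intro u; fin_cases u <;> simp <;> positivity
  · intro u; fin_cases u <;> simp <;> positivity
  · intro u; fin_cases u <;> simp <;> positivity
  · rw [Fin.sum_univ_three]; simp only [Matrix.cons_val_zero, Matrix.cons_val_one,
      Matrix.head_cons, Matrix.cons_val_two, Matrix.tail_cons]
    field_simp; rw [hD]; ring
  · rw [Fin.sum_univ_three]; simp only [Matrix.cons_val_zero, Matrix.cons_val_one,
      Matrix.head_cons, Matrix.cons_val_two, Matrix.tail_cons]
    field_simp; rw [hD]; ring
  · rw [Fin.sum_univ_three]; simp only [Matrix.cons_val_zero, Matrix.cons_val_one,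
      Matrix.head_cons, Matrix.cons_val_two, Matrix.tail_cons]
    field_simp; rw [hD]; ring
  · rw [Fin.sum_univ_three]; simp only [Matrix.cons_val_zero, Matrix.cons_val_one,
      Matrix.head_cons, Matrix.cons_val_two, Matrix.tail_cons]
    field_simp; rw [hD]; ring
  · apply le_antisymm
    · apply Finset.sup'_le
      intro u _
      fin_cases u
      · show (1 - ε) * r₀ * (r₁ - 1) / D / ((1 - ε) * (r₁ - 1) / D) ≤ r₀
        rw [e0]
      · show (1 - ε) * (r₀ - 1) / D / ((1 - ε) * r₁ * (r₀ - 1) / D) ≤ r₀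
        rw [e1]; exact hinv0
      · show ε / ε ≤ r₀
        rw [div_self hεne]; linarith
    · refine le_trans ?_ (Finset.le_sup' _ (Finset.mem_univ (0 : Fin 3)))
      show r₀ ≤ (1 - ε) * r₀ * (r₁ - 1) / D / ((1 - ε) * (r₁ - 1) / D)
      rw [e0]
  · apply le_antisymm
    · apply Finset.sup'_le
      intro u _
      fin_cases u
      · show (1 - ε) * r₁ * (r₀ - 1) / D / ((1 - ε) * (r₀ - 1) / D) ≤ r₁
        rw [f0]
      · show (1 - ε) * (r₁ - 1) / D / ((1 - ε) * r₀ * (r₁ - 1) / D) ≤ r₁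
        rw [f1]; exact hinv1
      · show ε / ε ≤ r₁
        rw [div_self hεne]; linarith
    · refine le_trans ?_ (Finset.le_sup' _ (Finset.mem_univ (0 : Fin 3)))
      show r₁ ≤ (1 - ε) * r₁ * (r₀ - 1) / D / ((1 - ε) * (r₀ - 1) / D)
      rw [f0]
end

section
/- Let Y, T, S be {0,1}-valued random variables with a joint distribution such that P(T=t, S=s) > 0 for all t,s ∈ {0,1} and P(Y=1|T=t, S=s) > 0 for all t,s. If P(Y=1|T=t,S=1) ≠ P(Y=1|T=t,S=0) for both t = 0 and t = 1, then the selection bias for the relative risk satisfies the strict inequality β_R^{obs}/β_R < [P(Y=1|T=1,S=1)/P(Y=1|T=0,S=1)] · [(max_{s∈{0,1}} P(Y=1|T=0,S=s)) / (min_{s∈{0,1}} P(Y=1|T=1,S=s))]. In particular, since this intermediate quantity is at most the Smith–VanderWeele bound BF₁·BF₀, the bias can never equal BF₁·BF₀, i.e., the SV bound for the relative risk in the total population is not sharp under this condition. -/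
section LinearOrderedField

variable {K : Type*} [Field K] [LinearOrder K] [IsStrictOrderedRing K] {a b c d : K}

theorem div_lt_add_div_add (hc : 0 < c) (hd : 0 < d) (h : a / c < b / d) :
    a / c < (a + b) / (c + d) := by
  rw [div_lt_div_iff₀ hc hd] at h
  rw [div_lt_div_iff₀ hc (add_pos hc hd)]
  linarith

theorem add_div_add_lt_div (hc : 0 < c) (hd : 0 < d) (h : a / c < b / d) :
    (a + b) / (c + d) < b / d := by
  rw [div_lt_div_iff₀ hc hd] at h
  rw [div_lt_div_iff₀ (add_pos hc hd) hd]
  linarith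

theorem add_div_add_mem_Ioo_min_max (hc : 0 < c) (hd : 0 < d) (h : a / c ≠ b / d) :
    min (a / c) (b / d) < (a + b) / (c + d) ∧ (a + b) / (c + d) < max (a / c) (b / d) := by
  rcases h.lt_or_gt with hlt | hgt
  · rw [min_eq_left hlt.le, max_eq_right hlt.le]
    exact ⟨div_lt_add_div_add hc hd hlt, add_div_add_lt_div hc hd hlt⟩
  · rw [min_eq_right hgt.le, max_eq_left hgt.le, add_comm a, add_comm c]
    exact ⟨div_lt_add_div_add hd hc hgt, add_div_add_lt_div hd hc hgt⟩

theorem div_div_lt_mul_div {m r₁ r₀ M : K} (ha : 0 < a) (hm : 0 < m) (hr₀ : 0 < r₀)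
    (h₁ : m < r₁) (h₀ : r₀ < M) : a / (r₁ / r₀) < a * (M / m) := by
  rw [div_div_eq_mul_div, mul_div_assoc]
  exact mul_lt_mul_of_pos_left (div_lt_div₀ h₀ h₁.le (hr₀.trans h₀).le hm) ha

end LinearOrderedField

theorem pYgT_eq_mediant (P : Bool → Bool → Bool → ℝ) (t : Bool) :
    pYgT P t = (P true t true + P true t false) /
      ((∑ y : Bool, P y t true) + ∑ y : Bool, P y t false) := by
  rw [pYgT, Finset.sum_comm (f := fun y s => P y t s)]
  simp only [Fintype.sum_bool]

theorem pYgT_mem_Ioo_min_max (P : Bool → Bool → Bool → ℝ) (t : Bool)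
    (hTS : ∀ s, 0 < ∑ y : Bool, P y t s) (hne : pYgTS P t true ≠ pYgTS P t false) :
    min (pYgTS P t true) (pYgTS P t false) < pYgT P t ∧
      pYgT P t < max (pYgTS P t true) (pYgTS P t false) := by
  rw [pYgT_eq_mediant]
  exact add_div_add_mem_Ioo_min_max (hTS true) (hTS false) hne

theorem stmt18_general (P : Bool → Bool → Bool → ℝ)
    (hTS : ∀ t s, 0 < ∑ y : Bool, P y t s)
    (hY : ∀ t s, 0 < pYgTS P t s)
    (hne : ∀ t, pYgTS P t true ≠ pYgTS P t false) :
    (pYgTS P true true / pYgTS P false true) / (pYgT P true / pYgT P false) <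
      (pYgTS P true true / pYgTS P false true) *
        (max (pYgTS P false true) (pYgTS P false false) /
          min (pYgTS P true true) (pYgTS P true false)) ∧
    ∀ BF : ℝ,
      (pYgTS P true true / pYgTS P false true) *
          (max (pYgTS P false true) (pYgTS P false false) /
            min (pYgTS P true true) (pYgTS P true false)) ≤ BF →
      (pYgTS P true true / pYgTS P false true) /
        (pYgT P true / pYgT P false) ≠ BF := by
  have bounds t := pYgT_mem_Ioo_min_max P t (hTS t) (hne t)
  have min_pos t : 0 < min (pYgTS P t true) (pYgTS P t false) :=
    lt_min (hY t true) (hY t false)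
  have bias_lt := div_div_lt_mul_div (div_pos (hY true true) (hY false true)) (min_pos true)
    ((min_pos false).trans (bounds false).1) (bounds true).1 (bounds false).2
  exact ⟨bias_lt, fun _ hBF => (bias_lt.trans_le hBF).ne⟩

/-- If `P(Y=1|T=t,S=1) ≠ P(Y=1|T=t,S=0)` for both `t = 0, 1`, then the
selection bias for the relative risk satisfies the strict inequality
`β_R^{obs}/β_R < β_R^{obs} · (max_s P(Y=1|T=0,S=s))/(min_s P(Y=1|T=1,S=s))`;
in particular the bias can never equal any quantity (such as the
Smith–VanderWeele bound `BF₁·BF₀`) that is at least this intermediate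
quantity, so the SV bound for the relative risk in the total population is
not sharp. -/
theorem stmt18 (P : Bool → Bool → Bool → ℝ)
    (hpos : ∀ y t s, 0 ≤ P y t s)
    (hsum : ∑ y : Bool, ∑ t : Bool, ∑ s : Bool, P y t s = 1)
    (hTS : ∀ t s, 0 < ∑ y : Bool, P y t s)
    (hY : ∀ t s, 0 < pYgTS P t s)
    (hne : ∀ t, pYgTS P t true ≠ pYgTS P t false) :
    (pYgTS P true true / pYgTS P false true) / (pYgT P true / pYgT P false) <
      (pYgTS P true true / pYgTS P false true) *
        (max (pYgTS P false true) (pYgTS P false false) /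
          min (pYgTS P true true) (pYgTS P true false)) ∧
    ∀ BF : ℝ,
      (pYgTS P true true / pYgTS P false true) *
          (max (pYgTS P false true) (pYgTS P false false) /
            min (pYgTS P true true) (pYgTS P true false)) ≤ BF →
      (pYgTS P true true / pYgTS P false true) /
        (pYgT P true / pYgT P false) ≠ BF :=
  stmt18_general P hTS hY hne
end

section
/- Let Y, T, S be {0,1}-valued random variables with a joint distribution such that P(T=t, S=s) > 0 for all t,s ∈ {0,1}. If P(Y=1|T=t,S=1) ≠ P(Y=1|T=t,S=0) for both t = 0 and t = 1, then the selection bias for the risk difference satisfies the strict inequality β_D^{obs} − β_D < [P(Y=1|T=1,S=1) − P(Y=1|T=0,S=1)] − [(min_{s∈{0,1}} P(Y=1|T=1,S=s)) − (max_{s∈{0,1}} P(Y=1|T=0,S=s))]. In particular, the bias can never equal the Smith–VanderWeele bound BF₁ − P(Y=1|T=1,S=1)/BF₁ + P(Y=1|T=0,S=1)·BF₀ (which is at least the right-hand side), i.e., the SV bound for the risk difference in the total population is not sharp under this condition. -/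
/-- If `P(Y=1|T=t,S=1) ≠ P(Y=1|T=t,S=0)` for both `t = 0, 1`, then the
selection bias for the risk difference satisfies the strict inequality
`β_D^{obs} − β_D < β_D^{obs} − [(min_s P(Y=1|T=1,S=s)) − (max_s P(Y=1|T=0,S=s))]`;
in particular the bias can never equal any quantity (such as the
Smith–VanderWeele bound `BF₁ − P(Y=1|T=1,S=1)/BF₁ + P(Y=1|T=0,S=1)·BF₀`)
that is at least this right-hand side, so the SV bound for the risk difference
in the total population is not sharp. -/
theorem stmt19 (P : Bool → Bool → Bool → ℝ)
    (hpos : ∀ y t s, 0 ≤ P y t s)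
    (hsum : ∑ y : Bool, ∑ t : Bool, ∑ s : Bool, P y t s = 1)
    (hTS : ∀ t s, 0 < ∑ y : Bool, P y t s)
    (hne : ∀ t, pYgTS P t true ≠ pYgTS P t false) :
    (pYgTS P true true - pYgTS P false true) - (pYgT P true - pYgT P false) <
      (pYgTS P true true - pYgTS P false true) -
        (min (pYgTS P true true) (pYgTS P true false) -
          max (pYgTS P false true) (pYgTS P false false)) ∧
    ∀ B : ℝ,
      (pYgTS P true true - pYgTS P false true) -
          (min (pYgTS P true true) (pYgTS P true false) -
            max (pYgTS P false true) (pYgTS P false false)) ≤ B →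
      (pYgTS P true true - pYgTS P false true) -
        (pYgT P true - pYgT P false) ≠ B := by
  have key : ∀ t, min (pYgTS P t true) (pYgTS P t false) < pYgT P t ∧
      pYgT P t < max (pYgTS P t true) (pYgTS P t false) := by
    intro t
    have d1 := hTS t true
    have d0 := hTS t false
    have hab := hne t
    set a := pYgTS P t true with ha
    set b := pYgTS P t false with hb
    set D1 : ℝ := ∑ y : Bool, P y t true with hD1
    set D0 : ℝ := ∑ y : Bool, P y t false with hD0
    have hD : (0:ℝ) < D1 + D0 := by linarith
    have haeq : P true t true = a * D1 := by
      rw [ha, pYgTS, div_mul_cancel₀]; exact ne_of_gt d1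
    have hbeq : P true t false = b * D0 := by
      rw [hb, pYgTS, div_mul_cancel₀]; exact ne_of_gt d0
    have hform : pYgT P t = (a * D1 + b * D0) / (D1 + D0) := by
      rw [pYgT]
      have h1 : (∑ s : Bool, P true t s) = a * D1 + b * D0 := by
        simp [Fintype.sum_bool, haeq, hbeq]
      have h2 : (∑ y : Bool, ∑ s : Bool, P y t s) = D1 + D0 := by
        rw [hD1, hD0, ← Finset.sum_add_distrib]
        simp [Fintype.sum_bool]
      rw [h1, h2]
    rw [hform]
    rcases lt_or_gt_of_ne hab with h | h
    · rw [min_eq_left h.le, max_eq_right h.le]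
      constructor
      · rw [lt_div_iff₀ hD]; nlinarith
      · rw [div_lt_iff₀ hD]; nlinarith
    · rw [min_eq_right h.le, max_eq_left h.le]
      constructor
      · rw [lt_div_iff₀ hD]; nlinarith
      · rw [div_lt_iff₀ hD]; nlinarith
  have h1 := (key true).1
  have h0 := (key false).2
  have main : (pYgTS P true true - pYgTS P false true) - (pYgT P true - pYgT P false) <
      (pYgTS P true true - pYgTS P false true) -
        (min (pYgTS P true true) (pYgTS P true false) -
          max (pYgTS P false true) (pYgTS P false false)) := by linarith
  exact ⟨main, fun B hB hEq => absurd hEq (ne_of_lt (lt_of_lt_of_le main hB))⟩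
end
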